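/- In every execution of the Hemlock transition-system model, every thread that starts the entry code for a lock L eventually enters the critical section protected by L. -/

import Mathlib

namespace Hemlock

/-- Program counter locations of a thread in the Hemlock algorithm. -/
inductive PC where
  | remainder  -- in the remainder section
  | entrySpin  -- in the entry code, spinning on the predecessor's Grant field
  | crit       -- in the critical section
  | exitCAS    -- in the exit code, about to perform the CAS on Tail
  | exitDoor   -- in the exit code, about to perform the exit doorstep (write Grant self := some L)
  | exitSpin   -- in the exit code, spinning on its own Grant field
deriving DecidableEq

/-- A global state of the Hemlock transition system. -/
structure St (Thread Lock : Type) where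
  Tail : Lock → Option Thread        -- the Tail field of each lock
  Grant : Thread → Option Lock       -- the Grant field of each thread
  pc : Thread → PC                   -- program counter of each thread
  lk : Thread → Option Lock          -- the lock currently being acquired/released by each thread
  pred : Thread → Option Thread      -- value returned by each thread's last SWAP

variable {Thread Lock : Type} [DecidableEq Thread] [DecidableEq Lock]

/-- The initial state: all Tail and Grant fields are none, all threads in the remainder. -/
def initSt : St Thread Lock :=
  ⟨fun _ => none, fun _ => none, fun _ => .remainder, fun _ => none, fun _ => none⟩

/-- One atomic transition of thread `t`. -/
inductive Step (t : Thread) : St Thread Lock → St Thread Lock → Prop where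
  /-- a step inside the remainder section -/
  | remainderStay (s : St Thread Lock) (h : s.pc t = .remainder) :
      Step t s s
  /-- the entry doorstep for lock `L`: atomic SWAP on `Tail L`, storing the old value in `pred`;
      if the SWAP returned `none` the thread enters the critical section, else it spins -/
  | doorstep (s : St Thread Lock) (L : Lock) (h : s.pc t = .remainder) :
      Step t s ⟨Function.update s.Tail L (some t), s.Grant,
        Function.update s.pc t (if s.Tail L = none then .crit else .entrySpin),
        Function.update s.lk t (some L),
        Function.update s.pred t (s.Tail L)⟩
  /-- entry-code busy-wait loop: read `Grant p`; it is not yet `some L`, keep spinning -/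
  | spinWait (s : St Thread Lock) (p : Thread) (L : Lock)
      (h : s.pc t = .entrySpin) (hp : s.pred t = some p) (hl : s.lk t = some L)
      (hg : s.Grant p ≠ some L) :
      Step t s s
  /-- entry-code busy-wait loop: read `Grant p = some L`; write `Grant p := none`
      and enter the critical section -/
  | spinAcquire (s : St Thread Lock) (p : Thread) (L : Lock)
      (h : s.pc t = .entrySpin) (hp : s.pred t = some p) (hl : s.lk t = some L)
      (hg : s.Grant p = some L) :
      Step t s ⟨s.Tail, Function.update s.Grant p none,
        Function.update s.pc t .crit, s.lk, s.pred⟩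
  /-- a step inside the critical section -/
  | critStay (s : St Thread Lock) (h : s.pc t = .crit) :
      Step t s s
  /-- leave the critical section and begin the exit code -/
  | exitStart (s : St Thread Lock) (h : s.pc t = .crit) :
      Step t s ⟨s.Tail, s.Grant, Function.update s.pc t .exitCAS, s.lk, s.pred⟩
  /-- successful CAS: `Tail L = some self`, so set `Tail L := none` and
      complete the exit code, returning to the remainder section -/
  | casSucc (s : St Thread Lock) (L : Lock)
      (h : s.pc t = .exitCAS) (hl : s.lk t = some L) (ht : s.Tail L = some t) :
      Step t s ⟨Function.update s.Tail L none, s.Grant,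
        Function.update s.pc t .remainder, Function.update s.lk t none, s.pred⟩
  /-- failed CAS: `Tail L ≠ some self`; proceed to the exit doorstep -/
  | casFail (s : St Thread Lock) (L : Lock)
      (h : s.pc t = .exitCAS) (hl : s.lk t = some L) (ht : s.Tail L ≠ some t) :
      Step t s ⟨s.Tail, s.Grant, Function.update s.pc t .exitDoor, s.lk, s.pred⟩
  /-- the exit doorstep: write `Grant self := some L` and start spinning on `Grant self` -/
  | exitDoorstep (s : St Thread Lock) (L : Lock)
      (h : s.pc t = .exitDoor) (hl : s.lk t = some L) :
      Step t s ⟨s.Tail, Function.update s.Grant t (some L),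
        Function.update s.pc t .exitSpin, s.lk, s.pred⟩
  /-- exit-code busy-wait loop: read `Grant self`; it is not yet `none`, keep spinning -/
  | exitSpinWait (s : St Thread Lock) (h : s.pc t = .exitSpin) (hg : s.Grant t ≠ none) :
      Step t s s
  /-- exit-code busy-wait loop: read `Grant self = none`; complete the exit code,
      returning to the remainder section -/
  | exitDone (s : St Thread Lock) (h : s.pc t = .exitSpin) (hg : s.Grant t = none) :
      Step t s ⟨s.Tail, s.Grant, Function.update s.pc t .remainder,
        Function.update s.lk t none, s.pred⟩

/-- An execution of the Hemlock transition system: an infinite sequence of states starting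
    from the initial state, where each step is one transition of the scheduled thread;
    every thread whose program counter is in the entry, exit or critical section eventually
    takes another step, and every thread leaves each critical section after finitely
    many steps. -/
structure Execution (Thread Lock : Type) [DecidableEq Thread] [DecidableEq Lock]
    [Fintype Thread] where
  states : ℕ → St Thread Lock
  sched : ℕ → Thread
  init : states 0 = initSt
  steps : ∀ n, Step (sched n) (states n) (states (n + 1))
  fair : ∀ n t, (states n).pc t ≠ PC.remainder → ∃ m, n ≤ m ∧ sched m = t
  critFinite : ∀ n t, (states n).pc t = PC.crit → ∃ m, n ≤ m ∧ (states m).pc t ≠ PC.crit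

variable [Fintype Thread]

/-- Thread `t` executes the entry doorstep (the SWAP) for lock `L` at time `n`. -/
def doorstepAt (E : Execution Thread Lock) (n : ℕ) (t : Thread) (L : Lock) : Prop :=
  E.sched n = t ∧ (E.states n).pc t = PC.remainder ∧
    (E.states (n + 1)).pc t ≠ PC.remainder ∧ (E.states (n + 1)).lk t = some L

/-- Thread `t` performs the CAS step of the exit code for lock `L` at time `n`
    (successful or not). -/
def casAt (E : Execution Thread Lock) (n : ℕ) (t : Thread) (L : Lock) : Prop :=
  E.sched n = t ∧ (E.states n).pc t = PC.exitCAS ∧ (E.states n).lk t = some L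

/-- Thread `t` performs the exit doorstep (the write `Grant t := some L`) at time `n`. -/
def exitDoorAt (E : Execution Thread Lock) (n : ℕ) (t : Thread) (L : Lock) : Prop :=
  E.sched n = t ∧ (E.states n).pc t = PC.exitDoor ∧ (E.states n).lk t = some L

/-- Thread `t` is in the critical section protected by `L` in state `s`. -/
def inCS (s : St Thread Lock) (t : Thread) (L : Lock) : Prop :=
  s.pc t = PC.crit ∧ s.lk t = some L

/-- Thread `t` is in the entry code for lock `L` in state `s`. -/
def inEntry (s : St Thread Lock) (t : Thread) (L : Lock) : Prop :=
  s.pc t = PC.entrySpin ∧ s.lk t = some L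

/-- Thread `t` enters the critical section protected by `L` at step `m`. -/
def entersCSAt (E : Execution Thread Lock) (m : ℕ) (t : Thread) (L : Lock) : Prop :=
  E.sched m = t ∧ (E.states m).pc t ≠ PC.crit ∧
    (E.states (m + 1)).pc t = PC.crit ∧ (E.states (m + 1)).lk t = some L

/-- Thread `t` completes its critical section protected by `L` at step `k`
    (leaving the critical section and beginning the exit code). -/
def exitsCSAt (E : Execution Thread Lock) (k : ℕ) (t : Thread) (L : Lock) : Prop :=
  E.sched k = t ∧ (E.states k).pc t = PC.crit ∧ (E.states k).lk t = some L ∧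
    (E.states (k + 1)).pc t ≠ PC.crit

/-- Thread `t` completes the exit code for lock `L` at step `k`
    (returning to the remainder section). -/
def completesExitAt (E : Execution Thread Lock) (k : ℕ) (t : Thread) (L : Lock) : Prop :=
  E.sched k = t ∧ (E.states k).lk t = some L ∧
    (E.states k).pc t ≠ PC.remainder ∧ (E.states (k + 1)).pc t = PC.remainder

/-- `m` is the first time at or after `n` at which thread `t` enters the
    critical section protected by `L`. -/
def firstEntryAfter (E : Execution Thread Lock) (n m : ℕ) (t : Thread) (L : Lock) : Prop :=
  n ≤ m ∧ entersCSAt E m t L ∧ ∀ k, n ≤ k → k < m → ¬ entersCSAt E k t L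

/-- At time `n`, thread `T` is spinning in the entry code waiting for `Grant w`
    to become `some L`: its next step reads `Grant w` inside the entry-code
    busy-wait loop with current lock `L` and `pred = some w`. -/
def spinningEntryFor (E : Execution Thread Lock) (n : ℕ) (T w : Thread) (L : Lock) : Prop :=
  (E.states n).pc T = PC.entrySpin ∧ (E.states n).pred T = some w ∧
    (E.states n).lk T = some L

/-- At time `n`, thread `T` is spinning on the word `Grant w`: its next step reads
    `Grant w` inside one of the two busy-wait loops (the entry-code loop with
    `pred = some w`, or the exit-code loop executed by `w` itself). -/
def spinningOn (E : Execution Thread Lock) (n : ℕ) (T w : Thread) : Prop :=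
  ((E.states n).pc T = PC.entrySpin ∧ (E.states n).pred T = some w) ∨
    (T = w ∧ (E.states n).pc T = PC.exitSpin)

/-- Lock `L` is associated with thread `T` at time `n`: `T` has executed the entry
    doorstep for `L` and has not yet completed the exit code for `L`. -/
def associated (E : Execution Thread Lock) (n : ℕ) (T : Thread) (L : Lock) : Prop :=
  ∃ m, m < n ∧ doorstepAt E m T L ∧ ∀ k, m < k → k < n → ¬ completesExitAt E k T L

set_option linter.unusedSectionVars false

/-! ### Auxiliary invariant machinery -/

/-- A "zombie": a thread in `exitSpin` whose grant has already been taken. -/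
def zom (s : St Thread Lock) (u : Thread) : Prop :=
  s.pc u = .exitSpin ∧ s.Grant u = none

/-- The chain of waiters of lock `L` hanging after `p`. -/
def wchain (s : St Thread Lock) (L : Lock) : Thread → List Thread → Prop
  | p, [] => s.Tail L = some p
  | p, w :: ws => s.pc w = .entrySpin ∧ s.lk w = some L ∧ s.pred w = some p ∧
      s.Grant w = none ∧ wchain s L w ws

def ownerCase (s : St Thread Lock) (L : Lock) (t0 : Thread) (ws : List Thread) : Prop :=
  s.lk t0 = some L ∧
  (s.pc t0 = .crit ∨ s.pc t0 = .exitCAS ∨ s.pc t0 = .exitDoor ∨ s.pc t0 = .exitSpin) ∧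
  (s.pc t0 = .exitSpin → s.Grant t0 = some L) ∧
  (s.pc t0 ≠ .exitSpin → s.Grant t0 = none) ∧
  wchain s L t0 ws ∧
  (∀ u, s.lk u = some L → u = t0 ∨ u ∈ ws ∨ zom s u)

def emptyCase (s : St Thread Lock) (L : Lock) : Prop :=
  s.Tail L = none ∧ ∀ u, s.lk u = some L → zom s u

def Inv (s : St Thread Lock) : Prop :=
  (∀ u, s.pc u = .remainder ↔ s.lk u = none) ∧
  (∀ u, s.pc u = .remainder → s.Grant u = none) ∧
  (∀ L, emptyCase s L ∨ ∃ t0 ws, ownerCase s L t0 ws)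

lemma wchain_mem {s : St Thread Lock} {L : Lock} {p : Thread} {ws : List Thread}
    (h : wchain s L p ws) {w : Thread} (hw : w ∈ ws) :
    s.pc w = .entrySpin ∧ s.lk w = some L ∧ s.Grant w = none := by
  induction ws generalizing p with
  | nil => cases hw
  | cons a tl ih =>
    rcases h with ⟨h1, h2, _, h4, h5⟩
    rcases List.mem_cons.1 hw with rfl | hw
    · exact ⟨h1, h2, h4⟩
    · exact ih h5 hw

lemma wchain_tail_isSome {s : St Thread Lock} {L : Lock} {p : Thread} {ws : List Thread}
    (h : wchain s L p ws) : ∃ q, s.Tail L = some q ∧ (q = p ∨ q ∈ ws) := by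
  induction ws generalizing p with
  | nil => exact ⟨p, h, Or.inl rfl⟩
  | cons a tl ih =>
    rcases h with ⟨_, _, _, _, h5⟩
    rcases ih h5 with ⟨q, hq, hq'⟩
    refine ⟨q, hq, Or.inr ?_⟩
    rcases hq' with rfl | hq'
    · exact List.mem_cons_self
    · exact List.mem_cons_of_mem _ hq'

lemma wchain_tail_mem {s : St Thread Lock} {L : Lock} {p : Thread} {ws : List Thread}
    (h : wchain s L p ws) (hne : ws ≠ []) : ∃ q ∈ ws, s.Tail L = some q := by
  induction ws generalizing p with
  | nil => exact absurd rfl hne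
  | cons a tl ih =>
    rcases h with ⟨_, _, _, _, h5⟩
    rcases tl with _ | ⟨b, tl⟩
    · exact ⟨a, by simp, h5⟩
    · rcases ih h5 (by simp) with ⟨q, hq, hq'⟩
      exact ⟨q, by simp [List.mem_cons.1 hq], hq'⟩

lemma wchain_preds {s : St Thread Lock} {L : Lock} {p : Thread} {ws : List Thread}
    (h : wchain s L p ws) {w : Thread} (hw : w ∈ ws) :
    ∃ q, s.pred w = some q ∧ (q = p ∨ q ∈ ws) := by
  induction ws generalizing p with
  | nil => cases hw
  | cons a tl ih =>
    rcases h with ⟨_, _, h3, _, h5⟩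
    rcases List.mem_cons.1 hw with rfl | hw
    · exact ⟨p, h3, Or.inl rfl⟩
    · rcases ih h5 hw with ⟨q, hq, hq'⟩
      refine ⟨q, hq, Or.inr ?_⟩
      rcases hq' with rfl | hq'
      · exact List.mem_cons_self
      · exact List.mem_cons_of_mem _ hq' 

lemma wchain_head {s : St Thread Lock} {L : Lock} {p : Thread} {ws : List Thread}
    (h : wchain s L p ws) (hp : p ∉ ws) {w : Thread} (hw : w ∈ ws)
    (hpred : s.pred w = some p) : ∃ rest, ws = w :: rest ∧ w ∉ rest ∧ wchain s L w rest := by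
  rcases ws with _ | ⟨a, tl⟩
  · cases hw
  · obtain ⟨h1, h2, h3, h4, h5⟩ := h
    rcases List.mem_cons.1 hw with heq | hw'
    · subst heq
      refine ⟨tl, rfl, ?_, h5⟩
      intro hmem
      rcases wchain_preds h5 hmem with ⟨q, hq, hq'⟩
      rw [hpred] at hq
      injection hq with hq
      subst hq
      rcases hq' with heq2 | hq'
      · exact hp (heq2 ▸ hw)
      · exact hp (List.mem_cons_of_mem _ hq')
    · rcases wchain_preds h5 hw' with ⟨q, hq, hq'⟩
      rw [hpred] at hq
      injection hq with hq
      subst hq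
      rcases hq' with heq2 | hq'
      · exact absurd (heq2 ▸ (List.mem_cons_self (a := a) (l := tl))) hp
      · exact absurd (List.mem_cons_of_mem _ hq') hp

lemma wchain_congr {s s' : St Thread Lock} {L : Lock} {p : Thread} {ws : List Thread}
    (h : wchain s L p ws) (htail : s'.Tail L = s.Tail L)
    (hmem : ∀ x ∈ ws, s'.pc x = s.pc x ∧ s'.lk x = s.lk x ∧ s'.pred x = s.pred x ∧
      s'.Grant x = s.Grant x) : wchain s' L p ws := by
  induction ws generalizing p with
  | nil => exact htail.trans h
  | cons a tl ih =>
    rcases h with ⟨h1, h2, h3, h4, h5⟩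
    obtain ⟨e1, e2, e3, e4⟩ := hmem a (by simp)
    exact ⟨e1.trans h1, e2.trans h2, e3.trans h3, e4.trans h4,
      ih h5 fun x hx => hmem x (by simp [hx])⟩

lemma wchain_snoc {s s' : St Thread Lock} {L : Lock} {p t : Thread} {ws : List Thread}
    (h : wchain s L p ws)
    (hmem : ∀ x ∈ ws, s'.pc x = s.pc x ∧ s'.lk x = s.lk x ∧ s'.pred x = s.pred x ∧
      s'.Grant x = s.Grant x)
    (htail : s'.Tail L = some t) (hpc : s'.pc t = .entrySpin) (hlk : s'.lk t = some L)
    (hgr : s'.Grant t = none) (hpred : s'.pred t = s.Tail L) :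
    wchain s' L p (ws ++ [t]) := by
  induction ws generalizing p with
  | nil => exact ⟨hpc, hlk, by rw [hpred, h], hgr, htail⟩
  | cons a tl ih =>
    rcases h with ⟨h1, h2, h3, h4, h5⟩
    obtain ⟨e1, e2, e3, e4⟩ := hmem a (by simp)
    exact ⟨e1.trans h1, e2.trans h2, e3.trans h3, e4.trans h4,
      ih h5 fun x hx => hmem x (by simp [hx])⟩

lemma ownerCase_not_mem {s : St Thread Lock} {L : Lock} {t0 : Thread} {ws : List Thread}
    (h : ownerCase s L t0 ws) : t0 ∉ ws := by
  intro hmem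
  obtain ⟨_, hown, _, _, hch, _⟩ := h
  have := (wchain_mem hch hmem).1
  rcases hown with h' | h' | h' | h' <;> rw [h'] at this <;> cases this

lemma grant_some_lk {s : St Thread Lock} (hInv : Inv s) {p : Thread} {L : Lock}
    (hg : s.Grant p = some L) : s.lk p = some L ∧ s.pc p = .exitSpin := by
  obtain ⟨hA, hC, hB⟩ := hInv
  have hpc : s.pc p ≠ .remainder := fun h => by rw [hC p h] at hg; cases hg
  have hlk : ∃ L'', s.lk p = some L'' := by
    rcases h' : s.lk p with _ | L''
    · exact absurd ((hA p).2 h') hpc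
    · exact ⟨L'', rfl⟩
  obtain ⟨L'', hlk⟩ := hlk
  rcases hB L'' with ⟨_, hz⟩ | ⟨a, ws, hoc⟩
  · rw [(hz p hlk).2] at hg; cases hg
  · obtain ⟨hlk0, _, hgs, hgn, hch, hacc⟩ := hoc
    rcases hacc p hlk with rfl | hmem | hzp
    · by_cases hsp : s.pc p = .exitSpin
      · rw [hgs hsp] at hg; cases hg; exact ⟨hlk, hsp⟩
      · rw [hgn hsp] at hg; cases hg
    · rw [(wchain_mem hch hmem).2.2] at hg; cases hg
    · rw [hzp.2] at hg; cases hg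

lemma pc_cases_ne {s : St Thread Lock} {t0 : Thread}
    (hown : s.pc t0 = .crit ∨ s.pc t0 = .exitCAS ∨ s.pc t0 = .exitDoor ∨ s.pc t0 = .exitSpin) :
    s.pc t0 ≠ .remainder ∧ s.pc t0 ≠ .entrySpin := by
  rcases hown with h | h | h | h <;> rw [h] <;> exact ⟨by simp, by simp⟩

lemma step_ownerCase {s s' : St Thread Lock} {u : Thread} (hInv : Inv s) (hst : Step u s s')
    {L : Lock} {t0 : Thread} {ws : List Thread} (hoc : ownerCase s L t0 ws) :
    ownerCase s' L t0 ws ∨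
    (s.pc u = .remainder ∧ ownerCase s' L t0 (ws ++ [u])) ∨
    (∃ rest, ws = u :: rest ∧ s.pc t0 = .exitSpin ∧ ownerCase s' L u rest ∧
      s'.pc u = .crit ∧ s'.lk u = some L) ∨
    (ws = [] ∧ u = t0 ∧ emptyCase s' L) := by
  have hnm : t0 ∉ ws := ownerCase_not_mem hoc
  have hInvKeep := hInv
  obtain ⟨hA, hC, hB⟩ := hInv
  obtain ⟨hlk0, hown, hgs, hgn, hch, hacc⟩ := hoc
  obtain ⟨h0r, h0e⟩ := pc_cases_ne hown
  -- facts about chain members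
  have hmemne : ∀ x ∈ ws, x ≠ u → True := fun _ _ _ => trivial
  cases hst with
  | remainderStay h => exact Or.inl ⟨hlk0, hown, hgs, hgn, hch, hacc⟩
  | doorstep L' h =>
    have hlku : s.lk u = none := (hA u).1 h
    have hne0 : t0 ≠ u := fun e => by rw [← e, hlk0] at hlku; cases hlku
    have hnw : u ∉ ws := fun hm => by
      have := (wchain_mem hch hm).2.1; rw [hlku] at this; cases this
    have hmemx : ∀ x ∈ ws, x ≠ u := fun x hx e => hnw (e ▸ hx)
    by_cases hLL : L = L'
    · subst hLL
      obtain ⟨q, hq, _⟩ := wchain_tail_isSome hch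
      have hTail : ¬ (s.Tail L = none) := by rw [hq]; simp
      refine Or.inr (Or.inl ⟨h, ?_, ?_, ?_, ?_, ?_, ?_⟩)
      · dsimp only; rw [Function.update_of_ne hne0, hlk0]
      · dsimp only; rw [Function.update_of_ne hne0]; exact hown
      · dsimp only; rw [Function.update_of_ne hne0]; exact hgs
      · dsimp only; rw [Function.update_of_ne hne0]; exact hgn
      · refine wchain_snoc hch ?_ ?_ ?_ ?_ ?_ ?_
        · intro x hx
          refine ⟨?_, ?_, ?_, rfl⟩ <;> dsimp only <;>
            rw [Function.update_of_ne (hmemx x hx)]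
        · dsimp only; rw [Function.update_self]
        · dsimp only; rw [Function.update_self, if_neg hTail]
        · dsimp only; rw [Function.update_self]
        · exact hC u h
        · dsimp only; rw [Function.update_self]
      · intro x hx
        by_cases hxu : x = u
        · subst hxu
          exact Or.inr (Or.inl (by simp))
        · dsimp only at hx
          rw [Function.update_of_ne hxu] at hx
          rcases hacc x hx with h' | h' | h'
          · exact Or.inl h'
          · exact Or.inr (Or.inl (by simp [h']))
          · refine Or.inr (Or.inr ⟨?_, h'.2⟩)
            dsimp only; rw [Function.update_of_ne hxu]; exact h'.1
    · -- other lock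
      refine Or.inl ⟨?_, ?_, ?_, ?_, ?_, ?_⟩
      · dsimp only; rw [Function.update_of_ne hne0]; exact hlk0
      · dsimp only; rw [Function.update_of_ne hne0]; exact hown
      · dsimp only; rw [Function.update_of_ne hne0]; exact hgs
      · dsimp only; rw [Function.update_of_ne hne0]; exact hgn
      · refine wchain_congr hch ?_ ?_
        · dsimp only; rw [Function.update_of_ne hLL]
        · intro x hx
          refine ⟨?_, ?_, ?_, rfl⟩ <;> dsimp only <;>
            rw [Function.update_of_ne (hmemx x hx)]
      · intro x hx
        dsimp only at hx
        by_cases hxu : x = u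
        · subst hxu
          rw [Function.update_self] at hx
          exact absurd (Option.some.inj hx).symm hLL
        · rw [Function.update_of_ne hxu] at hx
          rcases hacc x hx with h' | h' | h'
          · exact Or.inl h'
          · exact Or.inr (Or.inl h')
          · refine Or.inr (Or.inr ⟨?_, h'.2⟩)
            dsimp only; rw [Function.update_of_ne hxu]; exact h'.1
  | spinWait p L' h hp hl hg => exact Or.inl ⟨hlk0, hown, hgs, hgn, hch, hacc⟩
  | spinAcquire p L' h hp hl hg =>
    obtain ⟨hplk, hppc⟩ := grant_some_lk hInvKeep hg
    by_cases hLL : L = L'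
    · subst hLL
      have hu0 : u ≠ t0 := fun e => h0e (e ▸ h)
      have huw : u ∈ ws := by
        rcases hacc u hl with e | e | e
        · exact absurd e hu0
        · exact e
        · have := e.1; rw [h] at this; cases this
      have hpt0 : p = t0 := by
        rcases hacc p hplk with e | e | e
        · exact e
        · rw [(wchain_mem hch e).2.2] at hg; cases hg
        · rw [e.2] at hg; cases hg
      subst hpt0
      obtain ⟨rest, hws, hnr, hchr⟩ := wchain_head hch hnm huw hp
      have hrw : ∀ x ∈ rest, x ∈ ws := fun x hx => hws ▸ List.mem_cons_of_mem _ hx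
      refine Or.inr (Or.inr (Or.inl ⟨rest, hws, hppc, ⟨?_, ?_, ?_, ?_, ?_, ?_⟩, ?_, hl⟩))
      · exact hl
      · dsimp only; rw [Function.update_self]; exact Or.inl rfl
      · dsimp only; rw [Function.update_self]; intro hh; cases hh
      · intro _; dsimp only
        rw [Function.update_of_ne hu0]
        exact (wchain_mem hch huw).2.2
      · refine wchain_congr hchr rfl ?_
        intro x hx
        have hx0 : x ≠ p := fun e => hnm (e ▸ hrw x hx)
        have hxu : x ≠ u := fun e => hnr (e ▸ hx)
        refine ⟨?_, rfl, rfl, ?_⟩ <;> dsimp only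
        · rw [Function.update_of_ne hxu]
        · rw [Function.update_of_ne hx0]
      · intro x hx
        dsimp only at hx
        rcases hacc x hx with e | e | e
        · subst e
          refine Or.inr (Or.inr ⟨?_, ?_⟩) <;> dsimp only
          · rw [Function.update_of_ne (Ne.symm hu0)]; exact hppc
          · rw [Function.update_self]
        · rw [hws] at e
          rcases List.mem_cons.1 e with e' | e'
          · exact Or.inl e'
          · exact Or.inr (Or.inl e')
        · have hx0 : x ≠ p := fun e' => by
            have h2 := e.2; rw [e', hg] at h2; cases h2
          have hxu : x ≠ u := fun e' => by
            have h1 := e.1; rw [e', h] at h1; cases h1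
          refine Or.inr (Or.inr ⟨?_, ?_⟩) <;> dsimp only
          · rw [Function.update_of_ne hxu]; exact e.1
          · rw [Function.update_of_ne hx0]; exact e.2
      · dsimp only; rw [Function.update_self]
    · have hp0 : p ≠ t0 := fun e => hLL (by
        rw [← e, hplk] at hlk0; exact (Option.some.inj hlk0).symm)
      have hpw : p ∉ ws := fun e => hLL (by
        rw [(wchain_mem hch e).2.1] at hplk; exact Option.some.inj hplk)
      have hu0 : u ≠ t0 := fun e => hLL (by
        rw [← e, hl] at hlk0; exact (Option.some.inj hlk0).symm)
      have huw : u ∉ ws := fun e => hLL (by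
        rw [(wchain_mem hch e).2.1] at hl; exact Option.some.inj hl)
      refine Or.inl ⟨hlk0, ?_, ?_, ?_, ?_, ?_⟩
      · dsimp only; rw [Function.update_of_ne hu0.symm]; exact hown
      · dsimp only; rw [Function.update_of_ne hu0.symm, Function.update_of_ne hp0.symm]
        exact hgs
      · dsimp only; rw [Function.update_of_ne hu0.symm, Function.update_of_ne hp0.symm]
        exact hgn
      · refine wchain_congr hch rfl ?_
        intro x hx
        have hx0 : x ≠ p := fun e => hpw (e ▸ hx)
        have hxu : x ≠ u := fun e => huw (e ▸ hx)
        refine ⟨?_, rfl, rfl, ?_⟩ <;> dsimp only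
        · rw [Function.update_of_ne hxu]
        · rw [Function.update_of_ne hx0]
      · intro x hx
        dsimp only at hx
        rcases hacc x hx with e | e | e
        · exact Or.inl e
        · exact Or.inr (Or.inl e)
        · have hx0 : x ≠ p := fun e' => by
            have h2 := e.2; rw [e', hg] at h2; cases h2
          have hxu : x ≠ u := fun e' => by
            have h1 := e.1; rw [e', h] at h1; cases h1
          refine Or.inr (Or.inr ⟨?_, ?_⟩) <;> dsimp only
          · rw [Function.update_of_ne hxu]; exact e.1
          · rw [Function.update_of_ne hx0]; exact e.2
  | critStay h => exact Or.inl ⟨hlk0, hown, hgs, hgn, hch, hacc⟩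
  | exitStart h =>
    have hnw : u ∉ ws := fun hm => by
      have := (wchain_mem hch hm).1; rw [h] at this; cases this
    have hmemx : ∀ x ∈ ws, x ≠ u := fun x hx e => hnw (e ▸ hx)
    refine Or.inl ⟨hlk0, ?_, ?_, ?_, ?_, ?_⟩
    · by_cases hu0 : t0 = u
      · subst hu0; dsimp only; rw [Function.update_self]; exact Or.inr (Or.inl rfl)
      · dsimp only; rw [Function.update_of_ne hu0]; exact hown
    · by_cases hu0 : t0 = u
      · subst hu0; dsimp only; rw [Function.update_self]; intro hh; cases hh
      · dsimp only; rw [Function.update_of_ne hu0]; exact hgs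
    · by_cases hu0 : t0 = u
      · subst hu0; intro _; exact hgn (by rw [h]; simp)
      · dsimp only; rw [Function.update_of_ne hu0]; exact hgn
    · exact wchain_congr hch rfl fun x hx =>
        ⟨by dsimp only; rw [Function.update_of_ne (hmemx x hx)], rfl, rfl, rfl⟩
    · intro x hx
      dsimp only at hx
      rcases hacc x hx with e | e | e
      · exact Or.inl e
      · exact Or.inr (Or.inl e)
      · have hxu : x ≠ u := fun e' => by
          have h1 := e.1; rw [e', h] at h1; cases h1
        refine Or.inr (Or.inr ⟨?_, e.2⟩)
        dsimp only; rw [Function.update_of_ne hxu]; exact e.1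
  | casSucc L' h hl ht =>
    have hnw : u ∉ ws := fun hm => by
      have := (wchain_mem hch hm).1; rw [h] at this; cases this
    have hmemx : ∀ x ∈ ws, x ≠ u := fun x hx e => hnw (e ▸ hx)
    by_cases hLL : L = L'
    · subst hLL
      have hu0 : u = t0 := by
        rcases hacc u hl with e | e | e
        · exact e
        · exact absurd e hnw
        · have h1 := e.1; rw [h] at h1; cases h1
      subst hu0
      have hwsnil : ws = [] := by
        by_contra hne
        obtain ⟨q, hq, hq'⟩ := wchain_tail_mem hch hne
        rw [ht] at hq'
        injection hq' with hq'
        exact hnm (hq' ▸ hq)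
      refine Or.inr (Or.inr (Or.inr ⟨hwsnil, rfl, ?_, ?_⟩))
      · dsimp only; rw [Function.update_self]
      · intro x hx
        dsimp only at hx
        have hxu : x ≠ u := fun e => by rw [e, Function.update_self] at hx; cases hx
        rw [Function.update_of_ne hxu] at hx
        rcases hacc x hx with e | e | e
        · exact absurd e hxu
        · rw [hwsnil] at e; cases e
        · exact ⟨by dsimp only; rw [Function.update_of_ne hxu]; exact e.1, e.2⟩
    · have hu0 : u ≠ t0 := fun e => hLL (by
        rw [← e, hl] at hlk0; exact (Option.some.inj hlk0).symm)
      refine Or.inl ⟨?_, ?_, ?_, ?_, ?_, ?_⟩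
      · dsimp only; rw [Function.update_of_ne (Ne.symm hu0)]; exact hlk0
      · dsimp only; rw [Function.update_of_ne (Ne.symm hu0)]; exact hown
      · dsimp only; rw [Function.update_of_ne (Ne.symm hu0)]; exact hgs
      · dsimp only; rw [Function.update_of_ne (Ne.symm hu0)]; exact hgn
      · refine wchain_congr hch ?_ fun x hx => ?_
        · dsimp only; rw [Function.update_of_ne hLL]
        · exact ⟨by dsimp only; rw [Function.update_of_ne (hmemx x hx)],
            by dsimp only; rw [Function.update_of_ne (hmemx x hx)], rfl, rfl⟩
      · intro x hx
        dsimp only at hx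
        have hxu : x ≠ u := fun e => by rw [e, Function.update_self] at hx; cases hx
        rw [Function.update_of_ne hxu] at hx
        rcases hacc x hx with e | e | e
        · exact Or.inl e
        · exact Or.inr (Or.inl e)
        · exact Or.inr (Or.inr ⟨by
            dsimp only; rw [Function.update_of_ne hxu]; exact e.1, e.2⟩)
  | casFail L' h hl ht =>
    have hnw : u ∉ ws := fun hm => by
      have := (wchain_mem hch hm).1; rw [h] at this; cases this
    have hmemx : ∀ x ∈ ws, x ≠ u := fun x hx e => hnw (e ▸ hx)
    refine Or.inl ⟨hlk0, ?_, ?_, ?_, ?_, ?_⟩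
    · by_cases hu0 : t0 = u
      · subst hu0; dsimp only; rw [Function.update_self]; exact Or.inr (Or.inr (Or.inl rfl))
      · dsimp only; rw [Function.update_of_ne hu0]; exact hown
    · by_cases hu0 : t0 = u
      · subst hu0; dsimp only; rw [Function.update_self]; intro hh; cases hh
      · dsimp only; rw [Function.update_of_ne hu0]; exact hgs
    · by_cases hu0 : t0 = u
      · subst hu0; intro _; exact hgn (by rw [h]; simp)
      · dsimp only; rw [Function.update_of_ne hu0]; exact hgn
    · exact wchain_congr hch rfl fun x hx =>
        ⟨by dsimp only; rw [Function.update_of_ne (hmemx x hx)], rfl, rfl, rfl⟩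
    · intro x hx
      dsimp only at hx
      rcases hacc x hx with e | e | e
      · exact Or.inl e
      · exact Or.inr (Or.inl e)
      · have hxu : x ≠ u := fun e' => by
          have h1 := e.1; rw [e', h] at h1; cases h1
        refine Or.inr (Or.inr ⟨?_, e.2⟩)
        dsimp only; rw [Function.update_of_ne hxu]; exact e.1
  | exitDoorstep L' h hl =>
    have hnw : u ∉ ws := fun hm => by
      have := (wchain_mem hch hm).1; rw [h] at this; cases this
    have hmemx : ∀ x ∈ ws, x ≠ u := fun x hx e => hnw (e ▸ hx)
    by_cases hLL : L = L'
    · subst hLL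
      have hu0 : u = t0 := by
        rcases hacc u hl with e | e | e
        · exact e
        · exact absurd e hnw
        · have h1 := e.1; rw [h] at h1; cases h1
      subst hu0
      refine Or.inl ⟨hlk0, ?_, ?_, ?_, ?_, ?_⟩
      · dsimp only; rw [Function.update_self]; exact Or.inr (Or.inr (Or.inr rfl))
      · dsimp only; intro _; rw [Function.update_self]
      · dsimp only; rw [Function.update_self]; intro hh; exact absurd rfl hh
      · refine wchain_congr hch rfl fun x hx => ?_
        exact ⟨by dsimp only; rw [Function.update_of_ne (hmemx x hx)], rfl, rfl,
          by dsimp only; rw [Function.update_of_ne (hmemx x hx)]⟩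
      · intro x hx
        dsimp only at hx
        rcases hacc x hx with e | e | e
        · exact Or.inl e
        · exact Or.inr (Or.inl e)
        · have hxu : x ≠ u := fun e' => by
            have h1 := e.1; rw [e', h] at h1; cases h1
          exact Or.inr (Or.inr ⟨by dsimp only; rw [Function.update_of_ne hxu]; exact e.1,
            by dsimp only; rw [Function.update_of_ne hxu]; exact e.2⟩)
    · have hu0 : u ≠ t0 := fun e => hLL (by
        rw [← e, hl] at hlk0; exact (Option.some.inj hlk0).symm)
      refine Or.inl ⟨hlk0, ?_, ?_, ?_, ?_, ?_⟩
      · dsimp only; rw [Function.update_of_ne (Ne.symm hu0)]; exact hown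
      · dsimp only; rw [Function.update_of_ne (Ne.symm hu0),
          Function.update_of_ne (Ne.symm hu0)]; exact hgs
      · dsimp only; rw [Function.update_of_ne (Ne.symm hu0),
          Function.update_of_ne (Ne.symm hu0)]; exact hgn
      · refine wchain_congr hch rfl fun x hx => ?_
        exact ⟨by dsimp only; rw [Function.update_of_ne (hmemx x hx)], rfl, rfl,
          by dsimp only; rw [Function.update_of_ne (hmemx x hx)]⟩
      · intro x hx
        dsimp only at hx
        rcases hacc x hx with e | e | e
        · exact Or.inl e
        · exact Or.inr (Or.inl e)
        · have hxu : x ≠ u := fun e' => by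
            have h1 := e.1; rw [e', h] at h1; cases h1
          exact Or.inr (Or.inr ⟨by dsimp only; rw [Function.update_of_ne hxu]; exact e.1,
            by dsimp only; rw [Function.update_of_ne hxu]; exact e.2⟩)
  | exitSpinWait h hg => exact Or.inl ⟨hlk0, hown, hgs, hgn, hch, hacc⟩
  | exitDone h hg =>
    have hnw : u ∉ ws := fun hm => by
      have := (wchain_mem hch hm).1; rw [h] at this; cases this
    have hmemx : ∀ x ∈ ws, x ≠ u := fun x hx e => hnw (e ▸ hx)
    have hu0 : u ≠ t0 := fun e => by
      rw [e] at h hg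
      rw [hgs h] at hg
      cases hg
    refine Or.inl ⟨?_, ?_, ?_, ?_, ?_, ?_⟩
    · dsimp only; rw [Function.update_of_ne (Ne.symm hu0)]; exact hlk0
    · dsimp only; rw [Function.update_of_ne (Ne.symm hu0)]; exact hown
    · dsimp only; rw [Function.update_of_ne (Ne.symm hu0)]; exact hgs
    · dsimp only; rw [Function.update_of_ne (Ne.symm hu0)]; exact hgn
    · refine wchain_congr hch rfl fun x hx => ?_
      exact ⟨by dsimp only; rw [Function.update_of_ne (hmemx x hx)],
        by dsimp only; rw [Function.update_of_ne (hmemx x hx)], rfl, rfl⟩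
    · intro x hx
      dsimp only at hx
      have hxu : x ≠ u := fun e => by rw [e, Function.update_self] at hx; cases hx
      rw [Function.update_of_ne hxu] at hx
      rcases hacc x hx with e | e | e
      · exact Or.inl e
      · exact Or.inr (Or.inl e)
      · exact Or.inr (Or.inr ⟨by
          dsimp only; rw [Function.update_of_ne hxu]; exact e.1, e.2⟩)

lemma step_empty {s s' : St Thread Lock} {u : Thread} (hInv : Inv s) (hst : Step u s s')
    {L : Lock} (he : emptyCase s L) :
    emptyCase s' L ∨ (s'.pc u = .crit ∧ s'.lk u = some L ∧ ownerCase s' L u []) := by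
  have hInvKeep := hInv
  obtain ⟨hA, hC, hB⟩ := hInv
  obtain ⟨hT, hz⟩ := he
  cases hst with
  | remainderStay h => exact Or.inl ⟨hT, hz⟩
  | spinWait p L' h hp hl hg => exact Or.inl ⟨hT, hz⟩
  | critStay h => exact Or.inl ⟨hT, hz⟩
  | exitSpinWait h hg => exact Or.inl ⟨hT, hz⟩
  | doorstep L' h =>
    have hlku : s.lk u = none := (hA u).1 h
    by_cases hLL : L = L'
    · subst hLL
      refine Or.inr ⟨?_, ?_, ?_, ?_, ?_, ?_, ?_, ?_⟩
      · dsimp only; rw [Function.update_self, if_pos hT]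
      · dsimp only; rw [Function.update_self]
      · dsimp only; rw [Function.update_self]
      · dsimp only; rw [Function.update_self, if_pos hT]; exact Or.inl rfl
      · dsimp only; rw [Function.update_self, if_pos hT]; intro hh; cases hh
      · intro _; exact hC u h
      · show Function.update s.Tail L (some u) L = some u
        rw [Function.update_self]
      · intro x hx
        dsimp only at hx
        by_cases hxu : x = u
        · exact Or.inl hxu
        · rw [Function.update_of_ne hxu] at hx
          have := hz x hx
          exact Or.inr (Or.inr ⟨by dsimp only; rw [Function.update_of_ne hxu]; exact this.1,
            this.2⟩)
    · refine Or.inl ⟨?_, ?_⟩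
      · dsimp only; rw [Function.update_of_ne hLL]; exact hT
      · intro x hx
        dsimp only at hx
        have hxu : x ≠ u := fun e => by
          rw [e, Function.update_self] at hx
          exact hLL (Option.some.inj hx).symm
        rw [Function.update_of_ne hxu] at hx
        have := hz x hx
        exact ⟨by dsimp only; rw [Function.update_of_ne hxu]; exact this.1, this.2⟩
  | spinAcquire p L' h hp hl hg =>
    obtain ⟨hplk, hppc⟩ := grant_some_lk hInvKeep hg
    have hLL : L ≠ L' := fun e => by
      rw [← e] at hplk
      have := (hz p hplk).2
      rw [hg] at this; cases this
    refine Or.inl ⟨hT, ?_⟩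
    intro x hx
    dsimp only at hx
    have hxu : x ≠ u := fun e => by
      rw [← e, hx] at hl; exact hLL (Option.some.inj hl)
    have hxp : x ≠ p := fun e => by
      rw [← e, hx] at hplk; exact hLL (Option.some.inj hplk)
    have := hz x hx
    exact ⟨by dsimp only; rw [Function.update_of_ne hxu]; exact this.1,
      by dsimp only; rw [Function.update_of_ne hxp]; exact this.2⟩
  | exitStart h =>
    refine Or.inl ⟨hT, ?_⟩
    intro x hx
    dsimp only at hx
    have := hz x hx
    have hxu : x ≠ u := fun e => by
      have h1 := this.1; rw [e, h] at h1; cases h1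
    exact ⟨by dsimp only; rw [Function.update_of_ne hxu]; exact this.1, this.2⟩
  | casSucc L' h hl ht =>
    have hLL : L ≠ L' := fun e => by
      rw [← e] at hl
      have := (hz u hl).1
      rw [h] at this; cases this
    refine Or.inl ⟨?_, ?_⟩
    · dsimp only; rw [Function.update_of_ne hLL]; exact hT
    · intro x hx
      dsimp only at hx
      have hxu : x ≠ u := fun e => by rw [e, Function.update_self] at hx; cases hx
      rw [Function.update_of_ne hxu] at hx
      have := hz x hx
      exact ⟨by dsimp only; rw [Function.update_of_ne hxu]; exact this.1, this.2⟩
  | casFail L' h hl ht =>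
    refine Or.inl ⟨hT, ?_⟩
    intro x hx
    dsimp only at hx
    have := hz x hx
    have hxu : x ≠ u := fun e => by
      have h1 := this.1; rw [e, h] at h1; cases h1
    exact ⟨by dsimp only; rw [Function.update_of_ne hxu]; exact this.1, this.2⟩
  | exitDoorstep L' h hl =>
    refine Or.inl ⟨hT, ?_⟩
    intro x hx
    dsimp only at hx
    have := hz x hx
    have hxu : x ≠ u := fun e => by
      have h1 := this.1; rw [e, h] at h1; cases h1
    exact ⟨by dsimp only; rw [Function.update_of_ne hxu]; exact this.1,
      by dsimp only; rw [Function.update_of_ne hxu]; exact this.2⟩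
  | exitDone h hg =>
    refine Or.inl ⟨hT, ?_⟩
    intro x hx
    dsimp only at hx
    have hxu : x ≠ u := fun e => by rw [e, Function.update_self] at hx; cases hx
    rw [Function.update_of_ne hxu] at hx
    have := hz x hx
    exact ⟨by dsimp only; rw [Function.update_of_ne hxu]; exact this.1, this.2⟩

lemma inv_step {s s' : St Thread Lock} {u : Thread} (hInv : Inv s) (hst : Step u s s') :
    Inv s' := by
  have hInvKeep := hInv
  obtain ⟨hA, hC, hB⟩ := hInv
  refine ⟨?_, ?_, ?_⟩
  · -- clause A
    intro x
    cases hst with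
    | remainderStay h => exact hA x
    | spinWait p L' h hp hl hg => exact hA x
    | critStay h => exact hA x
    | exitSpinWait h hg => exact hA x
    | doorstep L' h =>
      by_cases hxu : x = u
      · subst hxu
        dsimp only
        rw [Function.update_self, Function.update_self]
        split <;> simp
      · dsimp only
        rw [Function.update_of_ne hxu, Function.update_of_ne hxu]
        exact hA x
    | spinAcquire p L' h hp hl hg =>
      by_cases hxu : x = u
      · subst hxu
        dsimp only
        rw [Function.update_self, hl]
        simp
      · dsimp only
        rw [Function.update_of_ne hxu]
        exact hA x
    | exitStart h =>
      by_cases hxu : x = u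
      · subst hxu
        dsimp only
        rw [Function.update_self]
        constructor
        · intro hh; cases hh
        · intro hh; rw [(hA x).2 hh] at h; cases h
      · dsimp only; rw [Function.update_of_ne hxu]; exact hA x
    | casSucc L' h hl ht =>
      by_cases hxu : x = u
      · subst hxu
        dsimp only
        rw [Function.update_self, Function.update_self]
        simp
      · dsimp only
        rw [Function.update_of_ne hxu, Function.update_of_ne hxu]
        exact hA x
    | casFail L' h hl ht =>
      by_cases hxu : x = u
      · subst hxu
        dsimp only
        rw [Function.update_self, hl]
        simp
      · dsimp only; rw [Function.update_of_ne hxu]; exact hA x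
    | exitDoorstep L' h hl =>
      by_cases hxu : x = u
      · subst hxu
        dsimp only
        rw [Function.update_self, hl]
        simp
      · dsimp only; rw [Function.update_of_ne hxu]; exact hA x
    | exitDone h hg =>
      by_cases hxu : x = u
      · subst hxu
        dsimp only
        rw [Function.update_self, Function.update_self]
        simp
      · dsimp only
        rw [Function.update_of_ne hxu, Function.update_of_ne hxu]
        exact hA x
  · -- clause C
    intro x
    cases hst with
    | remainderStay h => exact hC x
    | spinWait p L' h hp hl hg => exact hC x
    | critStay h => exact hC x
    | exitSpinWait h hg => exact hC x
    | doorstep L' h =>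
      by_cases hxu : x = u
      · subst hxu
        dsimp only
        rw [Function.update_self]
        intro hh
        split at hh <;> cases hh
      · dsimp only
        rw [Function.update_of_ne hxu]
        exact hC x
    | spinAcquire p L' h hp hl hg =>
      intro hh
      dsimp only at hh ⊢
      by_cases hxp : x = p
      · subst hxp; rw [Function.update_self]
      · rw [Function.update_of_ne hxp]
        by_cases hxu : x = u
        · subst hxu; rw [Function.update_self] at hh; cases hh
        · rw [Function.update_of_ne hxu] at hh; exact hC x hh
    | exitStart h =>
      intro hh
      dsimp only at hh ⊢
      by_cases hxu : x = u
      · subst hxu; rw [Function.update_self] at hh; cases hh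
      · rw [Function.update_of_ne hxu] at hh; exact hC x hh
    | casSucc L' h hl ht =>
      intro hh
      dsimp only at hh ⊢
      by_cases hxu : x = u
      · subst hxu
        rcases hB L' with ⟨_, hz⟩ | ⟨a, wsa, ⟨_, _, _, hgn', hch', hacc'⟩⟩
        · have := (hz x hl).1; rw [h] at this; cases this
        · have hxa : x = a := by
            rcases hacc' x hl with e | e | e
            · exact e
            · have := (wchain_mem hch' e).1; rw [h] at this; cases this
            · have := e.1; rw [h] at this; cases this
          subst hxa
          exact hgn' (by rw [h]; simp)
      · rw [Function.update_of_ne hxu] at hh; exact hC x hh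
    | casFail L' h hl ht =>
      intro hh
      dsimp only at hh ⊢
      by_cases hxu : x = u
      · subst hxu; rw [Function.update_self] at hh; cases hh
      · rw [Function.update_of_ne hxu] at hh; exact hC x hh
    | exitDoorstep L' h hl =>
      intro hh
      dsimp only at hh ⊢
      by_cases hxu : x = u
      · subst hxu; rw [Function.update_self] at hh; cases hh
      · rw [Function.update_of_ne hxu] at hh
        rw [Function.update_of_ne hxu]
        exact hC x hh
    | exitDone h hg =>
      intro hh
      dsimp only at hh ⊢
      by_cases hxu : x = u
      · subst hxu; exact hg
      · rw [Function.update_of_ne hxu] at hh; exact hC x hh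
  · -- clause B
    intro L
    rcases hB L with he | ⟨a, wsa, hoc⟩
    · rcases step_empty hInvKeep hst he with h' | ⟨_, _, h'⟩
      · exact Or.inl h'
      · exact Or.inr ⟨u, [], h'⟩
    · rcases step_ownerCase hInvKeep hst hoc with h' | ⟨_, h'⟩ | ⟨rest, _, _, h', _, _⟩ | ⟨_, _, h'⟩
      · exact Or.inr ⟨a, wsa, h'⟩
      · exact Or.inr ⟨a, wsa ++ [u], h'⟩
      · exact Or.inr ⟨u, rest, h'⟩
      · exact Or.inl h'

lemma inv_init : Inv (initSt : St Thread Lock) := by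
  refine ⟨fun u => by simp [initSt], fun u _ => rfl, fun L => Or.inl ⟨rfl, fun u h => ?_⟩⟩
  simp [initSt] at h

/-! ### Execution-level lemmas -/

variable [Fintype Thread]

lemma inv_all (E : Execution Thread Lock) : ∀ n, Inv (E.states n) := by
  intro n
  induction n with
  | zero => rw [E.init]; exact inv_init
  | succ n ih => exact inv_step ih (E.steps n)

lemma frame {s s' : St Thread Lock} {u x : Thread} (hst : Step u s s') (hx : x ≠ u) :
    s'.pc x = s.pc x ∧ s'.lk x = s.lk x ∧ s'.pred x = s.pred x := by
  cases hst <;> refine ⟨?_, ?_, ?_⟩ <;> dsimp only <;>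
    first
      | rfl
      | rw [Function.update_of_ne hx]

lemma step_from_remainder {s s' : St Thread Lock} {u : Thread} (hst : Step u s s')
    (h : s.pc u = .remainder) (h' : s'.pc u ≠ .remainder) :
    s'.pc u = .crit ∨ s'.pc u = .entrySpin := by
  cases hst with
  | remainderStay h0 => exact absurd h h'
  | doorstep L' h0 =>
    dsimp only; rw [Function.update_self]
    split
    · exact Or.inl rfl
    · exact Or.inr rfl
  | spinWait p L' h0 hp hl hg => rw [h] at h0; cases h0
  | spinAcquire p L' h0 hp hl hg => rw [h] at h0; cases h0
  | critStay h0 => rw [h] at h0; cases h0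
  | exitStart h0 => rw [h] at h0; cases h0
  | casSucc L' h0 hl ht => rw [h] at h0; cases h0
  | casFail L' h0 hl ht => rw [h] at h0; cases h0
  | exitDoorstep L' h0 hl => rw [h] at h0; cases h0
  | exitSpinWait h0 hg => rw [h] at h0; cases h0
  | exitDone h0 hg => rw [h] at h0; cases h0

lemma step_crit {s s' : St Thread Lock} {u : Thread} (hst : Step u s s')
    (h : s.pc u = .crit) (h' : s'.pc u ≠ .crit) : s'.pc u = .exitCAS := by
  cases hst with
  | critStay h0 => exact absurd h h'
  | exitStart h0 => dsimp only; rw [Function.update_self]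
  | remainderStay h0 => rw [h] at h0; cases h0
  | doorstep L' h0 => rw [h] at h0; cases h0
  | spinWait p L' h0 hp hl hg => rw [h] at h0; cases h0
  | spinAcquire p L' h0 hp hl hg => rw [h] at h0; cases h0
  | casSucc L' h0 hl ht => rw [h] at h0; cases h0
  | casFail L' h0 hl ht => rw [h] at h0; cases h0
  | exitDoorstep L' h0 hl => rw [h] at h0; cases h0
  | exitSpinWait h0 hg => rw [h] at h0; cases h0
  | exitDone h0 hg => rw [h] at h0; cases h0

lemma step_exitCAS {s s' : St Thread Lock} {u : Thread} (hst : Step u s s')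
    (h : s.pc u = .exitCAS) (hno : ∀ L', s.lk u = some L' → s.Tail L' ≠ some u) :
    s'.pc u = .exitDoor := by
  cases hst with
  | casSucc L' h0 hl ht => exact absurd ht (hno L' hl)
  | casFail L' h0 hl ht => dsimp only; rw [Function.update_self]
  | remainderStay h0 => rw [h] at h0; cases h0
  | doorstep L' h0 => rw [h] at h0; cases h0
  | spinWait p L' h0 hp hl hg => rw [h] at h0; cases h0
  | spinAcquire p L' h0 hp hl hg => rw [h] at h0; cases h0
  | critStay h0 => rw [h] at h0; cases h0
  | exitStart h0 => rw [h] at h0; cases h0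
  | exitDoorstep L' h0 hl => rw [h] at h0; cases h0
  | exitSpinWait h0 hg => rw [h] at h0; cases h0
  | exitDone h0 hg => rw [h] at h0; cases h0

lemma step_exitDoor {s s' : St Thread Lock} {u : Thread} (hst : Step u s s')
    (h : s.pc u = .exitDoor) : s'.pc u = .exitSpin := by
  cases hst with
  | exitDoorstep L' h0 hl => dsimp only; rw [Function.update_self]
  | remainderStay h0 => rw [h] at h0; cases h0
  | doorstep L' h0 => rw [h] at h0; cases h0
  | spinWait p L' h0 hp hl hg => rw [h] at h0; cases h0
  | spinAcquire p L' h0 hp hl hg => rw [h] at h0; cases h0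
  | critStay h0 => rw [h] at h0; cases h0
  | exitStart h0 => rw [h] at h0; cases h0
  | casSucc L' h0 hl ht => rw [h] at h0; cases h0
  | casFail L' h0 hl ht => rw [h] at h0; cases h0
  | exitSpinWait h0 hg => rw [h] at h0; cases h0
  | exitDone h0 hg => rw [h] at h0; cases h0

lemma step_waiter {s s' : St Thread Lock} {u p : Thread} {L : Lock} (hst : Step u s s')
    (h : s.pc u = .entrySpin) (hp : s.pred u = some p) (hl : s.lk u = some L)
    (hg : s.Grant p = some L) : s'.pc u = .crit ∧ s'.Grant p = none := by
  cases hst with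
  | spinWait p' L' h0 hp' hl' hg' =>
    rw [hp] at hp'
    injection hp' with hp'
    rw [hl] at hl'
    injection hl' with hl'
    rw [← hp', ← hl'] at hg'
    exact absurd hg hg'
  | spinAcquire p' L' h0 hp' hl' hg' =>
    rw [hp] at hp'
    injection hp' with hp'
    refine ⟨by dsimp only; rw [Function.update_self], ?_⟩
    dsimp only
    rw [hp', Function.update_self]
  | remainderStay h0 => rw [h] at h0; cases h0
  | doorstep L' h0 => rw [h] at h0; cases h0
  | critStay h0 => rw [h] at h0; cases h0
  | exitStart h0 => rw [h] at h0; cases h0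
  | casSucc L' h0 hl' ht => rw [h] at h0; cases h0
  | casFail L' h0 hl' ht => rw [h] at h0; cases h0
  | exitDoorstep L' h0 hl' => rw [h] at h0; cases h0
  | exitSpinWait h0 hg' => rw [h] at h0; cases h0
  | exitDone h0 hg' => rw [h] at h0; cases h0

lemma exists_least_sched (E : Execution Thread Lock) {n : ℕ} {t : Thread}
    (h : (E.states n).pc t ≠ .remainder) :
    ∃ m, n ≤ m ∧ E.sched m = t ∧ ∀ j, n ≤ j → j < m → E.sched j ≠ t := by
  classical
  obtain ⟨m0, hm0, hs0⟩ := E.fair n t h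
  have hP : ∃ m, n ≤ m ∧ E.sched m = t := ⟨m0, hm0, hs0⟩
  refine ⟨Nat.find hP, (Nat.find_spec hP).1, (Nat.find_spec hP).2, ?_⟩
  intro j hnj hjm hsj
  exact Nat.find_min hP hjm ⟨hnj, hsj⟩

lemma pc_const_until (E : Execution Thread Lock) {t : Thread} {n : ℕ} (k : ℕ)
    (h : ∀ j, j < k → E.sched (n + j) ≠ t) :
    (E.states (n + k)).pc t = (E.states n).pc t ∧
      (E.states (n + k)).lk t = (E.states n).lk t ∧
      (E.states (n + k)).pred t = (E.states n).pred t := by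
  induction k with
  | zero => exact ⟨rfl, rfl, rfl⟩
  | succ k ih =>
    obtain ⟨h1, h2, h3⟩ := ih fun j hj => h j (Nat.lt_succ_of_lt hj)
    have hne : t ≠ E.sched (n + k) := fun e => h k (Nat.lt_succ_self k) e.symm
    obtain ⟨g1, g2, g3⟩ := frame (E.steps (n + k)) hne
    exact ⟨g1.trans h1, g2.trans h2, g3.trans h3⟩

lemma persistChain (E : Execution Thread Lock) {L : Lock} {t0 : Thread} {ws : List Thread}
    {n : ℕ} (hoc : ownerCase (E.states n) L t0 ws) (hne : ws ≠ []) (k : ℕ)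
    (hk : ∀ j, j < k → (E.states (n + j)).pc t0 ≠ .exitSpin) :
    ∃ app, ownerCase (E.states (n + k)) L t0 (ws ++ app) := by
  induction k with
  | zero => exact ⟨[], by simpa using hoc⟩
  | succ k ih =>
    obtain ⟨app, hoc'⟩ := ih fun j hj => hk j (Nat.lt_succ_of_lt hj)
    rcases step_ownerCase (inv_all E (n + k)) (E.steps (n + k)) hoc' with
      h' | ⟨_, h'⟩ | ⟨rest, _, hsp, _, _, _⟩ | ⟨hnil, _, _⟩
    · exact ⟨app, h'⟩
    · exact ⟨app ++ [E.sched (n + k)], by rwa [← List.append_assoc]⟩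
    · exact absurd hsp (hk k (Nat.lt_succ_self k))
    · rcases List.append_eq_nil_iff.1 hnil with ⟨h1, _⟩
      exact absurd h1 hne

lemma step_exitSpin_grant {s s' : St Thread Lock} {u : Thread} (hst : Step u s s')
    (h : s.pc u = .exitSpin) (hg : s.Grant u ≠ none) : s'.pc u = .exitSpin := by
  cases hst with
  | exitSpinWait h0 hg0 => exact h
  | exitDone h0 hg0 => exact absurd hg0 hg
  | remainderStay h0 => rw [h] at h0; cases h0
  | doorstep L' h0 => rw [h] at h0; cases h0
  | spinWait p L' h0 hp hl hg0 => rw [h] at h0; cases h0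
  | spinAcquire p L' h0 hp hl hg0 => rw [h] at h0; cases h0
  | critStay h0 => rw [h] at h0; cases h0
  | exitStart h0 => rw [h] at h0; cases h0
  | casSucc L' h0 hl ht => rw [h] at h0; cases h0
  | casFail L' h0 hl ht => rw [h] at h0; cases h0
  | exitDoorstep L' h0 hl => rw [h] at h0; cases h0

lemma reach_crit (E : Execution Thread Lock) {L : Lock} {t0 : Thread} {ws : List Thread}
    {n : ℕ} (hoc : ownerCase (E.states n) L t0 ws) (hne : ws ≠ [])
    (hpc : (E.states n).pc t0 = .crit) :
    ∃ m, n ≤ m ∧ (∃ app, ownerCase (E.states m) L t0 (ws ++ app)) ∧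
      (E.states m).pc t0 = .exitCAS := by
  classical
  obtain ⟨m0, hm0, hq⟩ := E.critFinite n t0 hpc
  have hex : ∃ j, (E.states (n + j)).pc t0 ≠ .crit :=
    ⟨m0 - n, by rwa [show n + (m0 - n) = m0 by omega]⟩
  have hj0 : (E.states (n + Nat.find hex)).pc t0 ≠ .crit := Nat.find_spec hex
  have hlt : ∀ j, j < Nat.find hex → (E.states (n + j)).pc t0 = .crit := fun j hj =>
    of_not_not (Nat.find_min hex hj)
  have hj0pos : Nat.find hex ≠ 0 := fun e => hj0 (by rw [e, Nat.add_zero]; exact hpc)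
  obtain ⟨j1, hj1⟩ : ∃ j1, Nat.find hex = j1 + 1 := ⟨Nat.find hex - 1, by omega⟩
  have hpc1 : (E.states (n + j1)).pc t0 = .crit := hlt j1 (by omega)
  obtain ⟨app, hoc1⟩ := persistChain E hoc hne j1 fun j hj => by
    rw [hlt j (by omega)]; simp
  have hj0' : (E.states (n + j1 + 1)).pc t0 ≠ .crit := by
    rw [show n + j1 + 1 = n + (j1 + 1) from rfl, ← hj1]; exact hj0
  have hsched : E.sched (n + j1) = t0 := by
    by_contra hne'
    have := (frame (E.steps (n + j1)) fun e => hne' e.symm).1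
    rw [hpc1] at this
    exact hj0' this
  have hstep : Step t0 (E.states (n + j1)) (E.states (n + j1 + 1)) := hsched ▸ E.steps (n + j1)
  have hpcd := step_crit hstep hpc1 hj0'
  rcases step_ownerCase (inv_all E (n + j1)) (E.steps (n + j1)) hoc1 with
    h' | ⟨hru, h'⟩ | ⟨rest2, _, hsp, _, _, _⟩ | ⟨hnil, _, _⟩
  · exact ⟨n + j1 + 1, by omega, ⟨app, h'⟩, hpcd⟩
  · rw [hsched, hpc1] at hru; cases hru
  · rw [hpc1] at hsp; cases hsp
  · rcases List.append_eq_nil_iff.1 hnil with ⟨h1, _⟩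
    exact absurd h1 hne

lemma reach_cas (E : Execution Thread Lock) {L : Lock} {t0 : Thread} {ws : List Thread}
    {n : ℕ} (hoc : ownerCase (E.states n) L t0 ws) (hne : ws ≠ [])
    (hpc : (E.states n).pc t0 = .exitCAS) :
    ∃ m, n ≤ m ∧ (∃ app, ownerCase (E.states m) L t0 (ws ++ app)) ∧
      (E.states m).pc t0 = .exitDoor := by
  obtain ⟨m1, hm1, hsch, hleast⟩ := exists_least_sched E (n := n) (t := t0) (by rw [hpc]; simp)
  have hns : ∀ j, j < m1 - n → E.sched (n + j) ≠ t0 := fun j hj =>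
    hleast (n + j) (by omega) (by omega)
  obtain ⟨hpc1, -, -⟩ := pc_const_until E (m1 - n) hns
  rw [hpc] at hpc1
  obtain ⟨app, hoc1⟩ := persistChain E hoc hne (m1 - n) fun j hj => by
    rw [(pc_const_until E j fun i hi => hns i (lt_trans hi hj)).1, hpc]; simp
  have hstep : Step t0 (E.states (n + (m1 - n))) (E.states (n + (m1 - n) + 1)) := by
    have : E.sched (n + (m1 - n)) = t0 := by rw [show n + (m1 - n) = m1 by omega]; exact hsch
    exact this ▸ E.steps (n + (m1 - n))
  have hTail : ∀ L', (E.states (n + (m1 - n))).lk t0 = some L' →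
      (E.states (n + (m1 - n))).Tail L' ≠ some t0 := by
    intro L' hl' hT
    rw [hoc1.1] at hl'
    injection hl' with hl'
    subst hl'
    obtain ⟨q, hq, hq'⟩ := wchain_tail_mem hoc1.2.2.2.2.1 (by
      intro hcon; rcases List.append_eq_nil_iff.1 hcon with ⟨h1, _⟩; exact hne h1)
    rw [hT] at hq'
    injection hq' with hq'
    exact (ownerCase_not_mem hoc1) (hq' ▸ hq)
  have hpcd := step_exitCAS hstep hpc1 hTail
  rcases step_ownerCase (inv_all E (n + (m1 - n))) (E.steps (n + (m1 - n))) hoc1 with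
    h' | ⟨hru, h'⟩ | ⟨rest2, _, hsp, _, _, _⟩ | ⟨hnil, _, _⟩
  · exact ⟨n + (m1 - n) + 1, by omega, ⟨app, h'⟩, hpcd⟩
  · rw [show E.sched (n + (m1 - n)) = t0 by rw [show n + (m1 - n) = m1 by omega]; exact hsch,
      hpc1] at hru
    cases hru
  · rw [hpc1] at hsp; cases hsp
  · rcases List.append_eq_nil_iff.1 hnil with ⟨h1, _⟩
    exact absurd h1 hne

lemma reach_door (E : Execution Thread Lock) {L : Lock} {t0 : Thread} {ws : List Thread}
    {n : ℕ} (hoc : ownerCase (E.states n) L t0 ws) (hne : ws ≠ [])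
    (hpc : (E.states n).pc t0 = .exitDoor) :
    ∃ m, n ≤ m ∧ (∃ app, ownerCase (E.states m) L t0 (ws ++ app)) ∧
      (E.states m).pc t0 = .exitSpin := by
  obtain ⟨m1, hm1, hsch, hleast⟩ := exists_least_sched E (n := n) (t := t0) (by rw [hpc]; simp)
  have hns : ∀ j, j < m1 - n → E.sched (n + j) ≠ t0 := fun j hj =>
    hleast (n + j) (by omega) (by omega)
  obtain ⟨hpc1, -, -⟩ := pc_const_until E (m1 - n) hns
  rw [hpc] at hpc1
  obtain ⟨app, hoc1⟩ := persistChain E hoc hne (m1 - n) fun j hj => by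
    rw [(pc_const_until E j fun i hi => hns i (lt_trans hi hj)).1, hpc]; simp
  have hstep : Step t0 (E.states (n + (m1 - n))) (E.states (n + (m1 - n) + 1)) := by
    have : E.sched (n + (m1 - n)) = t0 := by rw [show n + (m1 - n) = m1 by omega]; exact hsch
    exact this ▸ E.steps (n + (m1 - n))
  have hpcd := step_exitDoor hstep hpc1
  rcases step_ownerCase (inv_all E (n + (m1 - n))) (E.steps (n + (m1 - n))) hoc1 with
    h' | ⟨hru, h'⟩ | ⟨rest2, _, hsp, _, _, _⟩ | ⟨hnil, _, _⟩
  · exact ⟨n + (m1 - n) + 1, by omega, ⟨app, h'⟩, hpcd⟩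
  · rw [show E.sched (n + (m1 - n)) = t0 by rw [show n + (m1 - n) = m1 by omega]; exact hsch,
      hpc1] at hru
    cases hru
  · rw [hpc1] at hsp; cases hsp
  · rcases List.append_eq_nil_iff.1 hnil with ⟨h1, _⟩
    exact absurd h1 hne

lemma pop (E : Execution Thread Lock) {L : Lock} {t0 w : Thread} {rest : List Thread}
    {n : ℕ} (hoc : ownerCase (E.states n) L t0 (w :: rest)) :
    ∃ m, n < m ∧ ∃ app, ownerCase (E.states m) L w (rest ++ app) ∧
      (E.states m).pc w = .crit ∧ (E.states m).lk w = some L := by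
  have hnecons : (w :: rest : List Thread) ≠ [] := by simp
  -- Phase 1: drive the owner to pc = exitSpin
  have hmain : ∃ m, n ≤ m ∧ ∃ app, ownerCase (E.states m) L t0 (w :: (rest ++ app)) ∧
      (E.states m).pc t0 = .exitSpin := by
    have reach3 : ∀ m', n ≤ m' → ∀ ws', ownerCase (E.states m') L t0 ((w :: rest) ++ ws') →
        (E.states m').pc t0 = .exitDoor →
        ∃ m, n ≤ m ∧ ∃ app, ownerCase (E.states m) L t0 (w :: (rest ++ app)) ∧
          (E.states m).pc t0 = .exitSpin := by
      intro m' hm' ws' hoc' hpc'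
      obtain ⟨m, hm, ⟨app, hoca⟩, hpca⟩ := reach_door E hoc' (by simp) hpc'
      rw [List.append_assoc, List.cons_append] at hoca
      exact ⟨m, le_trans hm' hm, ws' ++ app, hoca, hpca⟩
    have reach2 : ∀ m', n ≤ m' → ∀ ws', ownerCase (E.states m') L t0 ((w :: rest) ++ ws') →
        (E.states m').pc t0 = .exitCAS →
        ∃ m, n ≤ m ∧ ∃ app, ownerCase (E.states m) L t0 (w :: (rest ++ app)) ∧
          (E.states m).pc t0 = .exitSpin := by
      intro m' hm' ws' hoc' hpc'
      obtain ⟨m, hm, ⟨app, hoca⟩, hpca⟩ := reach_cas E hoc' (by simp) hpc'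
      rw [List.append_assoc] at hoca
      exact reach3 m (le_trans hm' hm) (ws' ++ app) hoca hpca
    rcases hoc.2.1 with hc | hc | hc | hc
    · obtain ⟨m, hm, ⟨app, hoca⟩, hpca⟩ := reach_crit E hoc hnecons hc
      exact reach2 m hm app hoca hpca
    · exact reach2 n le_rfl [] (by simpa using hoc) hc
    · exact reach3 n le_rfl [] (by simpa using hoc) hc
    · exact ⟨n, le_rfl, [], by simpa using hoc, hc⟩
  obtain ⟨m, hm, app, hocS, hpcS⟩ := hmain
  have hw1 : (E.states m).pc w = .entrySpin := hocS.2.2.2.2.1.1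
  obtain ⟨m1, hm1, hsch, hleast⟩ := exists_least_sched E (n := m) (t := w) (by rw [hw1]; simp)
  have persist : ∀ j, j ≤ m1 - m →
      ∃ app2, ownerCase (E.states (m + j)) L t0 (w :: (rest ++ app2)) ∧
        (E.states (m + j)).pc t0 = .exitSpin := by
    intro j
    induction j with
    | zero => exact fun _ => ⟨app, hocS, hpcS⟩
    | succ j ih =>
      intro hj
      obtain ⟨app2, hoc2, hpc2⟩ := ih (by omega)
      have hpc3 : (E.states (m + j + 1)).pc t0 = .exitSpin := by
        by_cases hsc : E.sched (m + j) = t0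
        · exact step_exitSpin_grant (hsc ▸ E.steps (m + j)) hpc2
            (by rw [hoc2.2.2.1 hpc2]; simp)
        · rw [(frame (E.steps (m + j)) fun e => hsc e.symm).1]; exact hpc2
      rcases step_ownerCase (inv_all E (m + j)) (E.steps (m + j)) hoc2 with
        h' | ⟨hru, h'⟩ | ⟨rest2, heq, hsp, _, _, _⟩ | ⟨hnil, _, _⟩
      · exact ⟨app2, h', hpc3⟩
      · refine ⟨app2 ++ [E.sched (m + j)], ?_, hpc3⟩
        rwa [← List.append_assoc]
      · exfalso
        have hhead : E.sched (m + j) = w := by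
          have := congrArg (fun l => l.head?) heq
          simpa using this.symm
        exact hleast (m + j) (by omega) (by omega) hhead
      · cases hnil
  obtain ⟨app2, hoc2, hpc2⟩ := persist (m1 - m) le_rfl
  have hkm : m + (m1 - m) = m1 := by omega
  -- Phase 3: the scheduled step of w acquires the lock
  obtain ⟨hw1', hw2', hw3', hw4', hch3'⟩ := hoc2.2.2.2.2.1
  have hGrant : (E.states (m + (m1 - m))).Grant t0 = some L := hoc2.2.2.1 hpc2
  have hstepw : Step w (E.states (m + (m1 - m))) (E.states (m + (m1 - m) + 1)) := by
    have : E.sched (m + (m1 - m)) = w := by rw [hkm]; exact hsch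
    exact this ▸ E.steps (m + (m1 - m))
  obtain ⟨hwcrit, hGnone⟩ := step_waiter hstepw hw1' hw3' hw2' hGrant
  have hwne : w ≠ t0 := fun e =>
    (ownerCase_not_mem hoc2) (e ▸ List.mem_cons_self (a := w) (l := rest ++ app2))
  rcases step_ownerCase (inv_all E (m + (m1 - m))) (E.steps (m + (m1 - m))) hoc2 with
    h' | ⟨hru, h'⟩ | ⟨rest2, heq, hsp, h', hcr, hlkw⟩ | ⟨hnil, _, _⟩
  · exfalso
    have hsc : E.sched (m + (m1 - m)) = w := by rw [hkm]; exact hsch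
    have ht0pc : (E.states (m + (m1 - m) + 1)).pc t0 = .exitSpin := by
      rw [(frame (E.steps (m + (m1 - m))) (by rw [hsc]; exact fun e => hwne e.symm)).1]
      exact hpc2
    have := h'.2.2.1 ht0pc
    rw [hGnone] at this
    cases this
  · exfalso
    rw [show E.sched (m + (m1 - m)) = w by rw [hkm]; exact hsch, hw1'] at hru
    cases hru
  · -- success
    have hsc : E.sched (m + (m1 - m)) = w := by rw [hkm]; exact hsch
    rw [hsc] at heq h' hcr hlkw
    injection heq with heq1 heq2
    subst heq2
    exact ⟨m + (m1 - m) + 1, by omega, app2, h', hcr, hlkw⟩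
  · cases hnil

lemma chain_enters (E : Execution Thread Lock) {L : Lock} :
    ∀ (k n : ℕ) (t0 t : Thread) (ws : List Thread),
      ownerCase (E.states n) L t0 ws → ws[k]? = some t →
      ∃ m, n < m ∧ inCS (E.states m) t L := by
  intro k
  induction k with
  | zero =>
    intro n t0 t ws hoc hget
    rcases ws with _ | ⟨w, rest⟩
    · cases hget
    · have hw : w = t := by simpa using hget
      subst hw
      obtain ⟨m, hm, app, hoc', hcr, hlk⟩ := pop E hoc
      exact ⟨m, hm, hcr, hlk⟩
  | succ k ih =>
    intro n t0 t ws hoc hget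
    rcases ws with _ | ⟨w, rest⟩
    · cases hget
    · have hget' : rest[k]? = some t := by simpa using hget
      obtain ⟨m, hm, app, hoc', hcr, hlk⟩ := pop E hoc
      have hk : k < rest.length := by
        by_contra hcon
        rw [List.getElem?_eq_none (by omega)] at hget'
        cases hget'
      have hget'' : (rest ++ app)[k]? = some t := by
        rw [List.getElem?_append, if_pos hk]
        exact hget'
      obtain ⟨m', hm', hcs⟩ := ih m w t (rest ++ app) hoc' hget''
      exact ⟨m', by omega, hcs⟩

/-- Every thread that starts the entry code for a lock `L` eventually enters the
critical section protected by `L`. -/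
theorem entry_code_enters_cs {Thread Lock : Type} [DecidableEq Thread] [DecidableEq Lock]
    [Fintype Thread] (E : Execution Thread Lock) (L : Lock) (t : Thread) (n : ℕ)
    (h : doorstepAt E n t L) :
    ∃ m, n < m ∧ inCS (E.states m) t L := by
  obtain ⟨hsch, hpcr, hpcr', hlk'⟩ := h
  have hstep : Step t (E.states n) (E.states (n + 1)) := hsch ▸ E.steps n
  rcases step_from_remainder hstep hpcr hpcr' with hc | hc
  · exact ⟨n + 1, by omega, hc, hlk'⟩
  · have hinv := inv_all E (n + 1)
    rcases hinv.2.2 L with ⟨_, hz⟩ | ⟨a, ws, hoc⟩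
    · have := (hz t hlk').1
      rw [hc] at this
      cases this
    · have hmem : t ∈ ws := by
        rcases hoc.2.2.2.2.2 t hlk' with e | e | e
        · exfalso
          rcases hoc.2.1 with h' | h' | h' | h' <;> rw [← e, hc] at h' <;> cases h'
        · exact e
        · exfalso
          have := e.1
          rw [hc] at this
          cases this
      obtain ⟨k, hk⟩ := List.mem_iff_getElem?.1 hmem
      obtain ⟨m, hm, hcs⟩ := chain_enters E k (n + 1) a t ws hoc hk
      exact ⟨m, by omega, hcs⟩

end Hemlock
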